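/- Let H be a finite nonempty type, let p : H → ℝ≥0 with ∑ h, p h = 1, and let h* be the unique maximizer of p. Fix m ≥ 2 and d ≥ 1, and define q : H × (Fin d → Fin m) → ℝ≥0 by q (h, f) = p h / m if f is a constant function, and q (h, f) = 0 otherwise. Then ∑ (h,f), q (h, f) = 1, and the set of global maximizers of q is exactly {(h*, fun _ => i) : i ∈ Fin m}, which has cardinality m. (This is the correctness of the paper's reduction gadget for (m,d)-Dissimilar Partial MAP: a chain of d−1 nodes each deterministically copying the value of the uniform node M, all added to the explanation set, yields exactly m equally most-probable explanations.) -/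

import Mathlib

/-!
Only constant `f` carry mass under `q`, and there are exactly `m` of them, so summing out `f`
gives back `p`. A maximizer of `q` must have constant `f` (otherwise `q = 0 < q (hstar, const)`)
and then maximize `p`, so its first coordinate is `hstar`.
-/

open scoped NNReal

open Finset Function Set

theorem ncard_setOf_forall_apply_eq {ι α : Type*} [Nonempty ι] [Nonempty α] :
    {f : ι → α | ∀ i j, f i = f j}.ncard = Nat.card α := by
  rw [← range_const_eq_diagonal, ncard_range_of_injective const_injective]

theorem sum_ite_div_ncard {α β K : Type*} [Fintype α] [Fintype β] [Semifield K] [CharZero K]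
    (g : α → K) (P : β → Prop) [DecidablePred P] {n : ℕ} (hPn : {b | P b}.ncard = n)
    (hn : n ≠ 0) : ∑ x : α × β, (if P x.2 then g x.1 / n else 0) = ∑ a, g a := by
  rw [ncard_eq_toFinset_card', toFinset_ofPred] at hPn
  rw [Fintype.sum_prod_type]
  refine sum_congr rfl fun a _ => ?_
  rw [← sum_filter]
  dsimp only
  rw [sum_const, hPn, nsmul_eq_mul, mul_div_cancel₀ _ (Nat.cast_ne_zero.2 hn)]

theorem setOf_forall_ite_le_ite {α β M : Type*} [Preorder M] [Zero M] {g : α → M} {a : α}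
    (hg : ∀ b, b ≠ a → g b < g a) (ha : 0 < g a) (P : β → Prop) [DecidablePred P]
    (hP : ∃ b, P b) :
    {x : α × β | ∀ y : α × β, (if P y.2 then g y.1 else 0) ≤ if P x.2 then g x.1 else 0}
      = {a} ×ˢ {b | P b} := by
  have hle : ∀ y : α × β, (if P y.2 then g y.1 else 0) ≤ g a := by
    intro y
    split_ifs
    · rcases eq_or_ne y.1 a with h | h
      · rw [h]
      · exact (hg _ h).le
    · exact ha.le
  ext ⟨b, c⟩
  simp only [mem_ofPred_eq, mem_prod, mem_singleton_iff]
  constructor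
  · intro hx
    obtain ⟨c₀, hc₀⟩ := hP
    have hge : g a ≤ if P c then g b else 0 := by simpa [hc₀] using hx (a, c₀)
    by_cases hc : P c
    · rw [if_pos hc] at hge
      exact ⟨by_contra fun hb => (hg b hb).not_ge hge, hc⟩
    · rw [if_neg hc] at hge
      exact (ha.not_ge hge).elim
  · rintro ⟨rfl, hc⟩ y
    simpa [hc] using hle y

open scoped Classical in
theorem dissimilar_gadget_correct_general {H : Type*} [Fintype H]
    (p : H → ℝ≥0) (hp : ∑ h, p h = 1)
    (hstar : H) (hmax : ∀ h : H, h ≠ hstar → p h < p hstar)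
    (m d : ℕ) (hm : 2 ≤ m) (hd : 1 ≤ d)
    (q : H × (Fin d → Fin m) → ℝ≥0)
    (hq : ∀ x : H × (Fin d → Fin m),
      q x = if ∀ i j : Fin d, x.2 i = x.2 j then p x.1 / (m : ℝ≥0) else 0) :
    (∑ x : H × (Fin d → Fin m), q x = 1) ∧
    ({x : H × (Fin d → Fin m) | ∀ y : H × (Fin d → Fin m), q y ≤ q x}
        = {x : H × (Fin d → Fin m) | ∃ i : Fin m, x = (hstar, fun _ => i)}) ∧
    {x : H × (Fin d → Fin m) | ∀ y : H × (Fin d → Fin m), q y ≤ q x}.ncard = m := by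
  have : Nonempty (Fin d) := Fin.pos_iff_nonempty.1 hd
  have : Nonempty (Fin m) := Fin.pos_iff_nonempty.1 (by omega)
  have hm0 : (0 : ℝ≥0) < m := Nat.cast_pos.2 (by omega)
  have hconst : {f : Fin d → Fin m | ∀ i j, f i = f j}.ncard = m := by
    simpa using ncard_setOf_forall_apply_eq (ι := Fin d) (α := Fin m)
  have hexists : ∃ f : Fin d → Fin m, ∀ i j, f i = f j := ⟨const _ (Classical.arbitrary _), fun _ _ => rfl⟩
  have hpos : 0 < p hstar := by
    obtain ⟨h, -, hh⟩ := exists_ne_zero_of_sum_ne_zero (hp ▸ one_ne_zero)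
    exact (pos_iff_ne_zero.2 hh).trans_le <| by
      rcases eq_or_ne h hstar with rfl | hne
      exacts [le_rfl, (hmax h hne).le]
  have hargmax : {x | ∀ y, q y ≤ q x} = range fun i : Fin m => (hstar, fun _ : Fin d => i) := by
    simp only [hq]
    rw [setOf_forall_ite_le_ite (g := fun h => p h / m)
        (fun h hh => div_lt_div_of_pos_right (hmax h hh) hm0) (div_pos hpos hm0) _ hexists,
      ← range_const_eq_diagonal, singleton_prod, ← range_comp]
    rfl
  refine ⟨?_, hargmax.trans ?_, ?_⟩
  · simp only [hq]
    rw [sum_ite_div_ncard _ _ hconst (by omega), hp]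
  · ext x
    simp [eq_comm]
  · rw [hargmax, ncard_range_of_injective, Nat.card_eq_fintype_card, Fintype.card_fin]
    exact fun i j hij => const_injective (congrArg Prod.snd hij)

/-- Correctness of the `(m,d)`-Dissimilar Partial MAP reduction gadget: a chain of
`d-1` nodes each deterministically copying the value of the uniform `m`-valued node,
all added to the explanation set, yields exactly `m` equally most-probable
explanations.  Formally: if `p : H → ℝ≥0` sums to `1` with unique maximizer `hstar`,
and `q (h, f) = p h / m` when `f : Fin d → Fin m` is constant and `0` otherwise,
then `q` sums to `1` and its set of global maximizers is exactly
`{(hstar, fun _ => i) | i : Fin m}`, of cardinality `m`. -/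
theorem dissimilar_gadget_correct {H : Type*} [Fintype H] [Nonempty H]
    (p : H → ℝ≥0) (hp : ∑ h, p h = 1)
    (hstar : H) (hmax : ∀ h : H, h ≠ hstar → p h < p hstar)
    (m d : ℕ) (hm : 2 ≤ m) (hd : 1 ≤ d)
    (q : H × (Fin d → Fin m) → ℝ≥0)
    (hq : ∀ x : H × (Fin d → Fin m),
      q x = if ∀ i j : Fin d, x.2 i = x.2 j then p x.1 / (m : ℝ≥0) else 0) :
    (∑ x : H × (Fin d → Fin m), q x = 1) ∧
    ({x : H × (Fin d → Fin m) | ∀ y : H × (Fin d → Fin m), q y ≤ q x}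
        = {x : H × (Fin d → Fin m) | ∃ i : Fin m, x = (hstar, fun _ => i)}) ∧
    {x : H × (Fin d → Fin m) | ∀ y : H × (Fin d → Fin m), q y ≤ q x}.ncard = m :=
  dissimilar_gadget_correct_general p hp hstar hmax m d hm hd q hq
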